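/- arXiv:1603.03667 — 3 statements merged into one kernel-verified Lean document; each statement's English description precedes it below -/
import Mathlib

section
/- Let s = σ + it be a complex number with 0 < σ < 1 and |t| > 1. Then for every a ∈ (0,1), the series ∑_{k=1}^∞ k^{-s} e^{2πika} converges and its sum equals F_s(a), the value at a of the analytic continuation of the periodized zeta function. -/
/-!
The partial sums `A K = ∑_{k=1}^K e^{2πika}` are geometric sums with ratio `e^{2πia} ≠ 1`, hence
bounded. Summation by parts rewrites the `K`-th partial sum of the series as
`∑_{k<K} A k (k^{-s} - (k+1)^{-s}) + A K K^{-s}`, and by the mean value theorem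
`|k^{-s} - (k+1)^{-s}| ≤ |s| k^{-σ-1}`. So for `σ > 0` the boundary term vanishes and the
Abel-summed series converges locally uniformly, to a function holomorphic on the half-plane
`σ > 0`. It agrees with `F_s(a)` for `σ > 1`, hence on the whole half-plane by the identity theorem.
-/

open MeasureTheory Complex Real Set Filter

/-- The periodized zeta function `F s a`, i.e. the analytic continuation in `s` of
`∑ k ≥ 1, exp (2πika) / k ^ s`, realized as Mathlib's `expZeta` at the point `a` of the
unit additive circle. -/
noncomputable def periodizedZeta (s : ℂ) (a : ℝ) : ℂ := HurwitzZeta.expZeta (a : UnitAddCircle) s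

namespace DirichletSeries

variable {c : ℕ → ℂ} {C : ℝ} {s : ℂ}

def coeffSum (c : ℕ → ℂ) (K : ℕ) : ℂ := ∑ k ∈ Finset.Icc 1 K, c k

noncomputable def abelTerm (c : ℕ → ℂ) (s : ℂ) (k : ℕ) : ℂ :=
  coeffSum c k * ((k : ℂ) ^ (-s) - ((k : ℂ) + 1) ^ (-s))

noncomputable def abelSum (c : ℕ → ℂ) (s : ℂ) : ℂ := ∑' k, abelTerm c s k

@[simp] lemma coeffSum_zero (c : ℕ → ℂ) : coeffSum c 0 = 0 := by simp [coeffSum]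

@[simp] lemma abelTerm_zero (c : ℕ → ℂ) (s : ℂ) : abelTerm c s 0 = 0 := by simp [abelTerm]

lemma sum_Icc_cpow_mul_eq (c : ℕ → ℂ) (s : ℂ) (K : ℕ) :
    ∑ k ∈ Finset.Icc 1 K, (k : ℂ) ^ (-s) * c k =
      ∑ k ∈ Finset.range K, abelTerm c s k + coeffSum c K * (K : ℂ) ^ (-s) := by
  induction K with
  | zero => simp
  | succ K ih =>
    have hcoeff : coeffSum c (K + 1) = coeffSum c K + c (K + 1) :=
      Finset.sum_Icc_succ_top K.succ_pos _
    rw [Finset.sum_Icc_succ_top K.succ_pos, ih, Finset.sum_range_succ, hcoeff, abelTerm]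
    push_cast
    ring

lemma norm_natCast_cpow_neg_sub_le {k : ℕ} (hk : 1 ≤ k) {s : ℂ} (hs : -1 ≤ s.re) :
    ‖(k : ℂ) ^ (-s) - ((k : ℂ) + 1) ^ (-s)‖ ≤ ‖s‖ * (k : ℝ) ^ (-(s.re + 1)) := by
  have hk₀ : (0 : ℝ) < k := by exact_mod_cast hk
  have hderiv : ∀ t ∈ Set.Icc (k : ℝ) (k + 1),
      HasDerivWithinAt (fun t : ℝ => (t : ℂ) ^ (-s)) (-s * (t : ℂ) ^ (-s - 1))
        (Set.Icc (k : ℝ) (k + 1)) t :=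
    fun t ht => ((hasStrictDerivAt_cpow_const (c := -s)
      (ofReal_mem_slitPlane.mpr (hk₀.trans_le ht.1))).hasDerivAt.comp_ofReal).hasDerivWithinAt
  have hbound : ∀ t ∈ Set.Icc (k : ℝ) (k + 1),
      ‖-s * (t : ℂ) ^ (-s - 1)‖ ≤ ‖s‖ * (k : ℝ) ^ (-(s.re + 1)) := by
    intro t ht
    rw [norm_mul, norm_neg, norm_cpow_eq_rpow_re_of_pos (hk₀.trans_le ht.1)]
    gcongr
    rw [show (-s - 1).re = -(s.re + 1) by simp; ring]
    exact Real.rpow_le_rpow_of_nonpos hk₀ ht.1 (by linarith)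
  have := (convex_Icc (k : ℝ) (k + 1)).norm_image_sub_le_of_norm_hasDerivWithin_le hderiv hbound
    (left_mem_Icc.mpr (by linarith)) (right_mem_Icc.mpr (by linarith))
  rw [norm_sub_rev]
  simpa using this

lemma norm_abelTerm_le (hC : ∀ K, ‖coeffSum c K‖ ≤ C) {δ : ℝ} (hδ : -1 ≤ δ) (hδs : δ ≤ s.re)
    (k : ℕ) : ‖abelTerm c s k‖ ≤ C * ‖s‖ * (k : ℝ) ^ (-(δ + 1)) := by
  have hC₀ : 0 ≤ C := (norm_nonneg _).trans (hC 0)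
  rcases Nat.eq_zero_or_pos k with rfl | hk
  · simp only [abelTerm_zero, norm_zero]
    positivity
  calc ‖abelTerm c s k‖ ≤ C * (‖s‖ * (k : ℝ) ^ (-(s.re + 1))) := by
        rw [abelTerm, norm_mul]
        gcongr
        exacts [hC k, norm_natCast_cpow_neg_sub_le hk (hδ.trans hδs)]
    _ ≤ C * ‖s‖ * (k : ℝ) ^ (-(δ + 1)) := by
        rw [← mul_assoc]
        gcongr
        exact_mod_cast hk

lemma summable_abelTerm (hC : ∀ K, ‖coeffSum c K‖ ≤ C) (hs : 0 < s.re) :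
    Summable (abelTerm c s) :=
  .of_norm_bounded ((Real.summable_nat_rpow.mpr (by linarith)).mul_left (C * ‖s‖))
    (norm_abelTerm_le hC (by linarith) le_rfl)

lemma tendsto_coeffSum_mul_cpow_neg (hC : ∀ K, ‖coeffSum c K‖ ≤ C) (hs : 0 < s.re) :
    Tendsto (fun K : ℕ => coeffSum c K * (K : ℂ) ^ (-s)) atTop (nhds 0) := by
  refine squeeze_zero_norm (fun K => ?_)
    (by simpa using ((tendsto_rpow_neg_atTop hs).comp tendsto_natCast_atTop_atTop).const_mul C)
  rw [norm_mul, norm_natCast_cpow_of_re_ne_zero _ (by simpa using hs.ne'), neg_re]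
  gcongr
  exact hC K

theorem tendsto_sum_Icc_cpow_mul (hC : ∀ K, ‖coeffSum c K‖ ≤ C) (hs : 0 < s.re) :
    Tendsto (fun K : ℕ => ∑ k ∈ Finset.Icc 1 K, (k : ℂ) ^ (-s) * c k) atTop
      (nhds (abelSum c s)) := by
  simp_rw [sum_Icc_cpow_mul_eq]
  simpa [abelSum] using ((summable_abelTerm hC hs).hasSum.tendsto_sum_nat).add
    (tendsto_coeffSum_mul_cpow_neg hC hs)

lemma differentiable_abelTerm (c : ℕ → ℂ) (k : ℕ) : Differentiable ℂ (abelTerm c · k) := by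
  cases k with
  | zero => simp only [abelTerm_zero]; exact differentiable_const 0
  | succ k =>
    exact ((differentiable_neg.const_cpow (.inl (Nat.cast_ne_zero.mpr k.succ_ne_zero))).sub
      (differentiable_neg.const_cpow (.inl (Nat.cast_add_one_ne_zero _)))).const_mul _

theorem differentiableOn_abelSum (hC : ∀ K, ‖coeffSum c K‖ ≤ C) :
    DifferentiableOn ℂ (abelSum c) {s | 0 < s.re} := by
  intro s₀ (hs₀ : 0 < s₀.re)
  let U : Set ℂ := {s | s₀.re / 2 < s.re ∧ ‖s‖ < ‖s₀‖ + 1}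
  have hU : IsOpen U :=
    (isOpen_lt continuous_const continuous_re).inter (isOpen_lt continuous_norm continuous_const)
  have hs₀U : s₀ ∈ U := ⟨by linarith, by linarith⟩
  have hC₀ : 0 ≤ C := (norm_nonneg _).trans (hC 0)
  refine (DifferentiableOn.differentiableAt (s := U) ?_ (hU.mem_nhds hs₀U)).differentiableWithinAt
  refine differentiableOn_tsum_of_summable_norm
    (u := fun k : ℕ => C * (‖s₀‖ + 1) * (k : ℝ) ^ (-(s₀.re / 2 + 1)))
    ((Real.summable_nat_rpow.mpr (by linarith)).mul_left _)
    (fun k => (differentiable_abelTerm c k).differentiableOn) hU fun k s hs => ?_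
  calc ‖abelTerm c s k‖ ≤ C * ‖s‖ * (k : ℝ) ^ (-(s₀.re / 2 + 1)) :=
        norm_abelTerm_le hC (δ := s₀.re / 2) (by linarith) hs.1.le k
    _ ≤ C * (‖s₀‖ + 1) * (k : ℝ) ^ (-(s₀.re / 2 + 1)) := by
        gcongr
        exact hs.2.le

lemma abelSum_eq_of_hasSum (hC : ∀ K, ‖coeffSum c K‖ ≤ C) (hs : 0 < s.re) {L : ℂ}
    (h : HasSum (fun k : ℕ => (k : ℂ) ^ (-s) * c k) L) : abelSum c s = L := by
  have hzero : ((0 : ℕ) : ℂ) ^ (-s) * c 0 = 0 := by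
    simp [zero_cpow (neg_ne_zero.mpr (ne_zero_of_re_pos hs))]
  refine tendsto_nhds_unique (tendsto_sum_Icc_cpow_mul hC hs) ?_
  refine ((tendsto_add_atTop_iff_nat 1).mpr h.tendsto_sum_nat).congr fun K => ?_
  rw [Nat.range_succ_eq_Icc_zero, ← Finset.insert_Icc_add_one_left_eq_Icc K.zero_le,
    Finset.sum_insert (by simp), hzero, zero_add]
  rfl

end DirichletSeries

lemma norm_sum_Icc_pow_le {z : ℂ} (hz : ‖z‖ ≤ 1) (hz₁ : z ≠ 1) (K : ℕ) :
    ‖∑ k ∈ Finset.Icc 1 K, z ^ k‖ ≤ 2 / ‖z - 1‖ := by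
  have hsum : ∑ k ∈ Finset.Icc 1 K, z ^ k = z * (z ^ K - 1) / (z - 1) := by
    rw [mul_div_assoc, ← geom_sum_eq hz₁, Finset.mul_sum, Finset.range_eq_Ico,
      ← Finset.Ico_add_one_right_eq_Icc]
    simp_rw [← pow_succ']
    rw [Finset.sum_Ico_add', zero_add]
  rw [hsum, norm_div]
  gcongr
  calc ‖z * (z ^ K - 1)‖ ≤ 1 * (1 + 1) := by
        rw [norm_mul]
        gcongr
        exact (norm_sub_le _ _).trans (by simpa using pow_le_one₀ (norm_nonneg z) hz)
    _ = 2 := by norm_num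

lemma exp_two_pi_mul_I_mul_ne_one {a : ℝ} (ha : (a : UnitAddCircle) ≠ 0) :
    cexp (2 * π * I * a) ≠ 1 := by
  have : cexp (2 * π * I * a) = AddCircle.toCircle (a : UnitAddCircle) := by
    rw [AddCircle.toCircle_apply_mk, Circle.coe_exp]
    push_cast
    ring_nf
  rw [this, ← Circle.coe_one, ne_eq, Circle.coe_inj, ← AddCircle.toCircle_zero]
  exact (AddCircle.injective_toCircle one_ne_zero).ne ha

lemma norm_coeffSum_exp_le {a : ℝ} (ha : (a : UnitAddCircle) ≠ 0) (K : ℕ) :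
    ‖DirichletSeries.coeffSum (fun k : ℕ => cexp (2 * π * I * k * a)) K‖ ≤
      2 / ‖cexp (2 * π * I * a) - 1‖ := by
  have hpow (k : ℕ) : cexp (2 * π * I * k * a) = cexp (2 * π * I * a) ^ k := by
    rw [← Complex.exp_nat_mul]
    ring_nf
  simp_rw [DirichletSeries.coeffSum, hpow]
  refine norm_sum_Icc_pow_le ?_ (exp_two_pi_mul_I_mul_ne_one ha) K
  simp [norm_exp]

theorem expZeta_eq_abelSum {a : ℝ} (ha : (a : UnitAddCircle) ≠ 0) {s : ℂ} (hs : 0 < s.re) :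
    HurwitzZeta.expZeta a s =
      DirichletSeries.abelSum (fun k : ℕ => cexp (2 * π * I * k * a)) s := by
  have hC := norm_coeffSum_exp_le ha
  have hU : IsOpen {s : ℂ | 0 < s.re} := isOpen_lt continuous_const continuous_re
  have hnear : HurwitzZeta.expZeta a =ᶠ[nhds 2]
      DirichletSeries.abelSum (fun k : ℕ => cexp (2 * π * I * k * a)) := by
    filter_upwards [(isOpen_lt continuous_const continuous_re).mem_nhds
      (show (1 : ℝ) < (2 : ℂ).re by norm_num)] with z hz
    refine (DirichletSeries.abelSum_eq_of_hasSum hC (zero_lt_one.trans hz)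
      ((HurwitzZeta.hasSum_expZeta_of_one_lt_re a hz).congr_fun fun k => ?_)).symm
    rw [cpow_neg, div_eq_inv_mul]
    ring_nf
  exact ((HurwitzZeta.differentiable_expZeta_of_ne_zero ha).differentiableOn.analyticOnNhd hU)
    |>.eqOn_of_preconnected_of_eventuallyEq
      ((DirichletSeries.differentiableOn_abelSum hC).analyticOnNhd hU)
      (convex_halfSpace_re_gt 0).isPreconnected (by norm_num) hnear hs

theorem periodizedZeta_eq_sum_general (s : ℂ) (hσ0 : 0 < s.re)
    (a : ℝ) (ha : a ∈ Set.Ioo (0 : ℝ) 1) :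
    Filter.Tendsto
      (fun K : ℕ => ∑ k ∈ Finset.Icc 1 K, (k : ℂ) ^ (-s) * Complex.exp (2 * π * Complex.I * k * a))
      Filter.atTop (nhds (periodizedZeta s a)) := by
  have ha₀ : (a : UnitAddCircle) ≠ 0 := by
    rw [Ne, AddCircle.coe_eq_zero_iff_of_mem_Ico (Ioo_subset_Ico_self ha)]
    exact ha.1.ne'
  rw [periodizedZeta, expZeta_eq_abelSum ha₀ hσ0]
  exact DirichletSeries.tendsto_sum_Icc_cpow_mul (norm_coeffSum_exp_le ha₀) hσ0

/-- for `0 < Re s < 1`, `|Im s| > 1` and `a ∈ (0,1)`, the partial sums of the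
series `∑_{k≥1} k^{-s} e^{2πika}` converge to `F_s(a)`. -/
theorem periodizedZeta_eq_sum (s : ℂ) (hσ0 : 0 < s.re) (hσ1 : s.re < 1) (ht : 1 < |s.im|)
    (a : ℝ) (ha : a ∈ Set.Ioo (0 : ℝ) 1) :
    Filter.Tendsto
      (fun K : ℕ => ∑ k ∈ Finset.Icc 1 K, (k : ℂ) ^ (-s) * Complex.exp (2 * π * Complex.I * k * a))
      Filter.atTop (nhds (periodizedZeta s a)) :=
  periodizedZeta_eq_sum_general s hσ0 a ha
end

section
/- Let s = σ + it be a complex number with 0 < σ < 1 and |t| > 1. Then for every real p with 1 ≤ p < 1/σ, the function a ↦ ζ(s,a) (the Hurwitz zeta function in the second variable) belongs to L^p(0,1). -/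
open MeasureTheory Complex Real Set Filter

/-!
For `0 < re s` and `a ∈ [0, 1]`,
`ζ(s, a) = a ^ (-s) + ζ(s) + ∑ₙ ((n + 1 + a) ^ (-s) - (n + 1) ^ (-s))`.
For `1 < re s` this is a regrouping of the Dirichlet series; it continues to `0 < re s` because
`ζ(·, a) - ζ(·)` is entire while, by the mean value theorem, the `n`-th term of the series is
`O(|s| n ^ (-re s - 1))` locally uniformly in `s`. The same bound makes the series continuous, hence
bounded, in `a ∈ [0, 1]`, so only `a ^ (-s)` matters, and `|a ^ (-s)| ^ p = a ^ (-p re s)` is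
integrable on `(0, 1)` exactly when `p re s < 1`.
-/

lemma norm_ofReal_cpow_neg_sub_le {z : ℂ} (hz : -1 ≤ z.re) {x y : ℝ} (hx : 0 < x) (hxy : x ≤ y) :
    ‖(y : ℂ) ^ (-z) - (x : ℂ) ^ (-z)‖ ≤ ‖z‖ * x ^ (-z.re - 1) * (y - x) := by
  have hderiv : ∀ u ∈ Icc x y, HasDerivWithinAt (fun v : ℝ => (v : ℂ) ^ (-z))
      (-z * (u : ℂ) ^ (-z - 1)) (Icc x y) u := fun u hu => by
    simpa only [id, mul_one] using ((hasDerivAt_id (u : ℂ)).cpow_const (c := -z)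
      (ofReal_mem_slitPlane.mpr (hx.trans_le hu.1))).comp_ofReal.hasDerivWithinAt
  have hbound : ∀ u ∈ Icc x y, ‖-z * (u : ℂ) ^ (-z - 1)‖ ≤ ‖z‖ * x ^ (-z.re - 1) := by
    intro u hu
    rw [norm_mul, norm_neg, norm_cpow_eq_rpow_re_of_pos (hx.trans_le hu.1), sub_re, neg_re,
      one_re]
    exact mul_le_mul_of_nonneg_left (Real.rpow_le_rpow_of_nonpos hx hu.1 (by linarith))
      (norm_nonneg z)
  simpa [Real.norm_eq_abs, abs_of_nonneg (sub_nonneg.mpr hxy)] using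
    (convex_Icc x y).norm_image_sub_le_of_norm_hasDerivWithin_le hderiv hbound
      (left_mem_Icc.mpr hxy) (right_mem_Icc.mpr hxy)

lemma summable_nat_add_one_rpow {r : ℝ} (hr : r < -1) :
    Summable fun n : ℕ => ((n : ℝ) + 1) ^ r := by
  simpa using (summable_nat_add_iff 1).mpr (Real.summable_nat_rpow.mpr hr)

lemma memLp_ofReal_cpow_neg_Ioo {z : ℂ} {p : ℝ} (hp : 0 < p) (hzp : z.re * p < 1) :
    MemLp (fun a : ℝ => (a : ℂ) ^ (-z)) (ENNReal.ofReal p) (volume.restrict (Ioo 0 1)) := by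
  have hmeas : AEStronglyMeasurable (fun a : ℝ => (a : ℂ) ^ (-z)) (volume.restrict (Ioo 0 1)) :=
    ContinuousOn.aestronglyMeasurable (fun a ha => ((continuousAt_cpow_const
      (ofReal_mem_slitPlane.mpr ha.1)).comp continuous_ofReal.continuousAt).continuousWithinAt)
      measurableSet_Ioo
  refine (integrable_norm_rpow_iff hmeas (by simpa using hp) ENNReal.ofReal_ne_top).mp ?_
  rw [ENNReal.toReal_ofReal hp.le]
  refine ((intervalIntegral.integrableOn_Ioo_rpow_iff one_pos).mpr
    (show -1 < -(z.re * p) by linarith)).congr_fun (fun a ha => ?_) measurableSet_Ioo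
  rw [norm_cpow_eq_rpow_re_of_pos ha.1, neg_re, ← Real.rpow_mul ha.1.le, neg_mul]

lemma ContinuousOn.memLp_restrict_of_isCompact {X E : Type*} [TopologicalSpace X]
    [MeasurableSpace X] [OpensMeasurableSpace X] [NormedAddCommGroup E]
    [SecondCountableTopologyEither X E] {μ : Measure X} [IsFiniteMeasureOnCompacts μ]
    {f : X → E} {K : Set X} (hf : ContinuousOn f K) (hK : IsCompact K) (hKm : MeasurableSet K)
    (p : ENNReal) : MemLp f p (μ.restrict K) := by
  have : IsFiniteMeasure (μ.restrict K) := isFiniteMeasure_restrict.mpr hK.measure_lt_top.ne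
  obtain ⟨C, hC⟩ := hK.exists_bound_of_continuousOn hf
  exact .of_bound (hf.aestronglyMeasurable hKm) C (ae_restrict_of_forall_mem hKm hC)

namespace HurwitzZeta

noncomputable def hurwitzZetaTailTerm (a : ℝ) (z : ℂ) (n : ℕ) : ℂ :=
  ((n + 1 + a : ℝ) : ℂ) ^ (-z) - ((n + 1 : ℝ) : ℂ) ^ (-z)

noncomputable def hurwitzZetaTail (a : ℝ) (z : ℂ) : ℂ :=
  ∑' n, hurwitzZetaTailTerm a z n

lemma norm_hurwitzZetaTailTerm_le {a : ℝ} (ha : a ∈ Icc (0 : ℝ) 1) {z : ℂ} (hz : -1 ≤ z.re)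
    (n : ℕ) : ‖hurwitzZetaTailTerm a z n‖ ≤ ‖z‖ * ((n : ℝ) + 1) ^ (-z.re - 1) := by
  calc ‖hurwitzZetaTailTerm a z n‖ ≤ ‖z‖ * ((n : ℝ) + 1) ^ (-z.re - 1) * (n + 1 + a - (n + 1)) :=
        norm_ofReal_cpow_neg_sub_le hz (by positivity) (by linarith [ha.1])
    _ ≤ ‖z‖ * ((n : ℝ) + 1) ^ (-z.re - 1) := by
        apply mul_le_of_le_one_right (by positivity)
        linarith [ha.2]

lemma differentiableAt_hurwitzZetaTail {a : ℝ} (ha : a ∈ Icc (0 : ℝ) 1) {z : ℂ} (hz : 0 < z.re) :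
    DifferentiableAt ℂ (hurwitzZetaTail a) z := by
  set U : Set ℂ := {w | z.re / 2 < w.re ∧ ‖w‖ < ‖z‖ + 1}
  have hU : IsOpen U := (isOpen_lt continuous_const continuous_re).inter
    (isOpen_lt continuous_norm continuous_const)
  have hzU : z ∈ U := ⟨by linarith, by linarith⟩
  have hterm : ∀ n, DifferentiableOn ℂ (hurwitzZetaTailTerm a · n) U := fun n w hw =>
    have hw0 : -w ≠ 0 := neg_ne_zero.mpr (ne_zero_of_re_pos (by linarith [hw.1]))
    ((differentiableAt_id.neg.const_cpow (Or.inr hw0)).sub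
      (differentiableAt_id.neg.const_cpow (Or.inr hw0))).differentiableWithinAt
  have hbound : ∀ n, ∀ w ∈ U, ‖hurwitzZetaTailTerm a w n‖ ≤
      (‖z‖ + 1) * ((n : ℝ) + 1) ^ (-(z.re / 2) - 1) := by
    intro n w hw
    refine (norm_hurwitzZetaTailTerm_le ha (by linarith [hw.1]) n).trans ?_
    gcongr
    · exact hw.2.le
    · simp
    · linarith [hw.1]
  exact (differentiableOn_tsum_of_summable_norm
    ((summable_nat_add_one_rpow (by linarith)).mul_left _) hterm hU hbound).differentiableAt
    (hU.mem_nhds hzU)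

lemma continuousOn_hurwitzZetaTail {z : ℂ} (hz : 0 < z.re) :
    ContinuousOn (hurwitzZetaTail · z) (Icc 0 1) := by
  have hterm : ∀ n : ℕ, ContinuousOn (hurwitzZetaTailTerm · z n) (Icc 0 1) := by
    intro n a ha
    refine ContinuousAt.continuousWithinAt (ContinuousAt.sub ?_ continuousAt_const)
    exact (continuousAt_cpow_const (ofReal_mem_slitPlane.mpr (by linarith [ha.1]))).comp
      (f := fun a : ℝ => ((n + 1 + a : ℝ) : ℂ)) (by fun_prop)
  exact continuousOn_tsum hterm ((summable_nat_add_one_rpow (by linarith)).mul_left ‖z‖)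
    fun n a ha => norm_hurwitzZetaTailTerm_le ha (by linarith) n

lemma hasSum_hurwitzZetaTailTerm {a : ℝ} (ha : a ∈ Icc (0 : ℝ) 1) {z : ℂ} (hz : 1 < z.re) :
    HasSum (hurwitzZetaTailTerm a z)
      (hurwitzZeta a z - hurwitzZeta 0 z - (a : ℂ) ^ (-z)) := by
  have hz0 : z ≠ 0 := ne_zero_of_re_pos (by linarith)
  have hdiff := (hasSum_hurwitzZeta_of_one_lt_re ha hz).sub
    (by simpa using hasSum_hurwitzZeta_of_one_lt_re (left_mem_Icc.mpr zero_le_one) hz)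
  have h := (hasSum_nat_add_iff' 1).mpr hdiff
  simp only [Finset.range_one, Finset.sum_singleton, Nat.cast_zero, zero_add, one_div,
    ← cpow_neg, zero_cpow (neg_ne_zero.mpr hz0), sub_zero, Nat.cast_add_one] at h
  exact h.congr_fun fun n => by push_cast [hurwitzZetaTailTerm]; rfl

lemma hurwitzZeta_eq_cpow_add_riemannZeta_add_tail {a : ℝ} (ha : a ∈ Icc (0 : ℝ) 1) {z : ℂ}
    (hz : 0 < z.re) :
    hurwitzZeta a z = (a : ℂ) ^ (-z) + riemannZeta z + hurwitzZetaTail a z := by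
  set U : Set ℂ := {w | 0 < w.re}
  have hU : IsOpen U := isOpen_lt continuous_const continuous_re
  have hlhs : AnalyticOnNhd ℂ (fun w => hurwitzZeta a w - hurwitzZeta 0 w) U :=
    (differentiable_hurwitzZeta_sub_hurwitzZeta _ _).differentiableOn.analyticOnNhd hU
  have hrhs : AnalyticOnNhd ℂ (fun w => (a : ℂ) ^ (-w) + hurwitzZetaTail a w) U := by
    refine DifferentiableOn.analyticOnNhd (fun w hw => ?_) hU
    exact ((differentiableAt_id.neg.const_cpow
      (Or.inr (neg_ne_zero.mpr (ne_zero_of_re_pos hw)))).add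
      (differentiableAt_hurwitzZetaTail ha hw)).differentiableWithinAt
  have hagree : (fun w => hurwitzZeta a w - hurwitzZeta 0 w) =ᶠ[nhds 2]
      fun w => (a : ℂ) ^ (-w) + hurwitzZetaTail a w := by
    filter_upwards [(isOpen_lt continuous_const continuous_re).mem_nhds
      (show (1 : ℝ) < (2 : ℂ).re by norm_num)] with w hw
    rw [hurwitzZetaTail, (hasSum_hurwitzZetaTailTerm ha hw).tsum_eq]
    ring
  have := hlhs.eqOn_of_preconnected_of_eventuallyEq hrhs (convex_halfSpace_re_gt 0).isPreconnected
    (show (2 : ℂ) ∈ U by norm_num [U]) hagree hz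
  rw [← hurwitzZeta_zero]
  linear_combination this

end HurwitzZeta

theorem hurwitzZeta_memLp_general (s : ℂ) (hσ0 : 0 < s.re)
    (p : ℝ) (hp1 : 1 ≤ p) (hp2 : p < 1 / s.re) :
    MeasureTheory.MemLp (fun a : ℝ => HurwitzZeta.hurwitzZeta (a : UnitAddCircle) s)
      (ENNReal.ofReal p) (MeasureTheory.volume.restrict (Set.Ioo (0 : ℝ) 1)) := by
  have hsingular : MemLp (fun a : ℝ => (a : ℂ) ^ (-s)) (ENNReal.ofReal p)
      (volume.restrict (Ioo 0 1)) :=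
    memLp_ofReal_cpow_neg_Ioo (by linarith) (by rwa [lt_div_iff₀' hσ0] at hp2)
  have hregular : MemLp (fun a : ℝ => riemannZeta s + HurwitzZeta.hurwitzZetaTail a s)
      (ENNReal.ofReal p) (volume.restrict (Ioo 0 1)) :=
    (ContinuousOn.memLp_restrict_of_isCompact
      (continuousOn_const.add (HurwitzZeta.continuousOn_hurwitzZetaTail hσ0)) isCompact_Icc
      measurableSet_Icc _).mono_measure (Measure.restrict_mono Ioo_subset_Icc_self le_rfl)
  refine (hsingular.add hregular).ae_eq ?_
  filter_upwards [ae_restrict_mem measurableSet_Ioo] with a ha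
  rw [Pi.add_apply,
    HurwitzZeta.hurwitzZeta_eq_cpow_add_riemannZeta_add_tail (Ioo_subset_Icc_self ha) hσ0]
  ring

/-- for `0 < Re s < 1`, `|Im s| > 1` and `1 ≤ p < 1/Re s`, the Hurwitz zeta
function `a ↦ ζ(s,a)` belongs to `L^p (0,1)`. -/
theorem hurwitzZeta_memLp (s : ℂ) (hσ0 : 0 < s.re) (hσ1 : s.re < 1) (ht : 1 < |s.im|)
    (p : ℝ) (hp1 : 1 ≤ p) (hp2 : p < 1 / s.re) :
    MeasureTheory.MemLp (fun a : ℝ => HurwitzZeta.hurwitzZeta (a : UnitAddCircle) s)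
      (ENNReal.ofReal p) (MeasureTheory.volume.restrict (Set.Ioo (0 : ℝ) 1)) :=
  hurwitzZeta_memLp_general s hσ0 p hp1 hp2
end

section
/- Let s = σ + it be a complex number with σ > 1/2, and assume moreover that σ > 1 or |t| > 1. Then F_s ∈ L²(0,1) and the partial sums S_K(a) = ∑_{k=1}^K k^{-s} e^{2πika} converge to F_s in the L²(0,1) norm as K → ∞. -/
/-!
For `a ∉ ℤ` the geometric sums `∑_{k ≤ n} e^{2πika}` are bounded, so summation by parts turns
`∑ k^{-s} e^{2πika}` into a series that converges absolutely and locally uniformly for `Re s > 0`.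
Its sum is holomorphic there and equals `F_s(a)` for `Re s > 1`, hence for all `Re s > 0` by the
identity theorem. For `Re s > 1/2` the coefficients are square-summable, so by orthonormality of
the exponentials the partial sums converge in `L²(0,1)`; a subsequence converges almost
everywhere, which identifies the `L²` limit with the pointwise limit `F_s`.
-/

open MeasureTheory Complex Real Set Filter

open Topology

section DirichletTest

variable {𝕜 E : Type*} [NormedField 𝕜] [NormedAddCommGroup E] [NormedSpace 𝕜 E]

theorem tendsto_sum_range_smul_of_summable_by_parts {f : ℕ → 𝕜} {g : ℕ → E}
    (hf : Tendsto f atTop (𝓝 0)) {C : ℝ} (hg : ∀ n, ‖∑ i ∈ Finset.range n, g i‖ ≤ C)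
    (hsum : Summable fun i ↦ (f (i + 1) - f i) • ∑ j ∈ Finset.range (i + 1), g j) :
    Tendsto (fun n ↦ ∑ i ∈ Finset.range n, f i • g i) atTop
      (𝓝 (-∑' i, (f (i + 1) - f i) • ∑ j ∈ Finset.range (i + 1), g j)) := by
  rw [funext fun n ↦ Finset.sum_range_by_parts f g n]
  have hboundary : Tendsto (fun n ↦ f (n - 1) • ∑ i ∈ Finset.range n, g i) atTop (𝓝 0) :=
    NormedField.tendsto_zero_smul_of_tendsto_zero_of_bounded
      (hf.comp (tendsto_sub_atTop_nat 1)) ⟨C, eventually_map.2 (Eventually.of_forall hg)⟩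
  simpa using hboundary.sub (hsum.hasSum.tendsto_sum_nat.comp (tendsto_sub_atTop_nat 1))

end DirichletTest

theorem norm_geom_sum_le {𝕜 : Type*} [NormedField 𝕜] {z : 𝕜} (hz₁ : ‖z‖ ≤ 1) (hz : z ≠ 1)
    (n : ℕ) : ‖∑ i ∈ Finset.range n, z ^ i‖ ≤ 2 / ‖z - 1‖ := by
  rw [geom_sum_eq hz, norm_div]
  gcongr
  calc ‖z ^ n - 1‖ ≤ ‖z‖ ^ n + 1 := by simpa only [norm_pow, norm_one] using norm_sub_le (z ^ n) 1
    _ ≤ 2 := by linarith [pow_le_one₀ (norm_nonneg z) hz₁ (n := n)]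

theorem norm_ofReal_add_one_cpow_sub_le {x : ℝ} (hx : 0 < x) {s : ℂ} (hs : -1 ≤ s.re) :
    ‖((x + 1 : ℝ) : ℂ) ^ (-s) - (x : ℂ) ^ (-s)‖ ≤ ‖s‖ * x ^ (-s.re - 1) := by
  have hderiv : ∀ y ∈ Icc x (x + 1),
      HasDerivWithinAt (fun y : ℝ ↦ (y : ℂ) ^ (-s)) (-s * (y : ℂ) ^ (-s - 1)) (Icc x (x + 1)) y :=
    fun y hy ↦ ((hasStrictDerivAt_cpow_const (ofReal_mem_slitPlane.2 (hx.trans_le hy.1))).hasDerivAt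
      |>.comp_ofReal).hasDerivWithinAt
  have hbound : ∀ y ∈ Icc x (x + 1), ‖-s * (y : ℂ) ^ (-s - 1)‖ ≤ ‖s‖ * x ^ (-s.re - 1) := by
    intro y hy
    rw [norm_mul, norm_neg, norm_cpow_eq_rpow_re_of_pos (hx.trans_le hy.1)]
    gcongr
    exact rpow_le_rpow_of_nonpos hx hy.1 (by simp; linarith)
  simpa using (convex_Icc x (x + 1)).norm_image_sub_le_of_norm_hasDerivWithin_le hderiv hbound
    (left_mem_Icc.2 (by linarith)) (right_mem_Icc.2 (by linarith))

theorem Finset.sum_Icc_one_eq_sum_range {M : Type*} [AddCommMonoid M] (f : ℕ → M) (n : ℕ) :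
    ∑ k ∈ Finset.Icc 1 n, f k = ∑ k ∈ Finset.range n, f (k + 1) := by
  rw [Finset.range_eq_Ico, Finset.sum_Ico_add', zero_add, Finset.Ico_add_one_right_eq_Icc]

section Polylog

variable {z : ℂ}

noncomputable def abelPolylogTerm (z s : ℂ) (j : ℕ) : ℂ :=
  (((j + 1 + 1 : ℕ) : ℂ) ^ (-s) - ((j + 1 : ℕ) : ℂ) ^ (-s)) *
    ∑ i ∈ Finset.range (j + 1), z ^ (i + 1)

/-- The polylogarithm `∑_{k ≥ 1} z ^ k / k ^ s` after summation by parts, which makes it converge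
for `0 < re s` when `‖z‖ ≤ 1`, `z ≠ 1`. -/
noncomputable def abelPolylog (z s : ℂ) : ℂ := -∑' j, abelPolylogTerm z s j

theorem norm_sum_range_pow_succ_le (hz₁ : ‖z‖ ≤ 1) (hz : z ≠ 1) (n : ℕ) :
    ‖∑ i ∈ Finset.range n, z ^ (i + 1)‖ ≤ 2 / ‖z - 1‖ := by
  simp_rw [pow_succ', ← Finset.mul_sum, norm_mul]
  calc ‖z‖ * ‖∑ i ∈ Finset.range n, z ^ i‖ ≤ 1 * (2 / ‖z - 1‖) := by
        gcongr; exact norm_geom_sum_le hz₁ hz n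
    _ = 2 / ‖z - 1‖ := one_mul _

theorem norm_abelPolylogTerm_le (hz₁ : ‖z‖ ≤ 1) (hz : z ≠ 1) {s : ℂ} (hs : -1 ≤ s.re) (j : ℕ) :
    ‖abelPolylogTerm z s j‖ ≤ ‖s‖ * (2 / ‖z - 1‖) * ((j + 1 : ℕ) : ℝ) ^ (-s.re - 1) := by
  have hdiff := norm_ofReal_add_one_cpow_sub_le (x := ((j + 1 : ℕ) : ℝ)) (by positivity) hs
  rw [abelPolylogTerm, norm_mul, mul_right_comm]
  push_cast at hdiff ⊢
  exact mul_le_mul hdiff (norm_sum_range_pow_succ_le hz₁ hz _) (norm_nonneg _) (by positivity)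

theorem summable_natCast_succ_rpow {p : ℝ} (hp : p < -1) :
    Summable fun j : ℕ ↦ ((j + 1 : ℕ) : ℝ) ^ p :=
  (summable_nat_add_iff 1).2 (Real.summable_nat_rpow.2 hp)

theorem tendsto_sum_range_cpow_mul_pow (hz₁ : ‖z‖ ≤ 1) (hz : z ≠ 1) {s : ℂ} (hs : 0 < s.re) :
    Tendsto (fun n ↦ ∑ k ∈ Finset.range n, ((k + 1 : ℕ) : ℂ) ^ (-s) * z ^ (k + 1)) atTop
      (𝓝 (abelPolylog z s)) := by
  have hcoef : Tendsto (fun k : ℕ ↦ ((k + 1 : ℕ) : ℂ) ^ (-s)) atTop (𝓝 0) := by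
    refine tendsto_zero_iff_norm_tendsto_zero.2 ?_
    simp_rw [norm_natCast_cpow_of_pos (Nat.succ_pos _), neg_re]
    exact (tendsto_rpow_neg_atTop hs).comp
      (tendsto_natCast_atTop_atTop.comp (tendsto_add_atTop_nat 1))
  have hsum : Summable (abelPolylogTerm z s) :=
    .of_norm_bounded
      ((summable_natCast_succ_rpow (by linarith : -s.re - 1 < -1)).mul_left (‖s‖ * (2 / ‖z - 1‖)))
      (norm_abelPolylogTerm_le hz₁ hz (by linarith))
  exact tendsto_sum_range_smul_of_summable_by_parts hcoef (norm_sum_range_pow_succ_le hz₁ hz) hsum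

theorem differentiableOn_abelPolylog (hz₁ : ‖z‖ ≤ 1) (hz : z ≠ 1) :
    DifferentiableOn ℂ (abelPolylog z) {s | 0 < s.re} := by
  intro s₀ hs₀
  set σ := s₀.re / 2 with hσ_def
  have hσ : 0 < σ := half_pos hs₀
  have hball : ∀ w ∈ Metric.ball s₀ σ, σ ≤ w.re ∧ ‖w‖ ≤ ‖s₀‖ + σ := by
    intro w hw
    rw [Metric.mem_ball, dist_eq_norm] at hw
    have hre := (abs_le.1 ((abs_re_le_norm (w - s₀)).trans hw.le)).1
    rw [sub_re] at hre
    exact ⟨by linarith, by linarith [norm_le_norm_add_norm_sub' w s₀]⟩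
  have hterm : ∀ j, Differentiable ℂ fun w ↦ abelPolylogTerm z w j := fun j ↦
    ((differentiable_neg.const_cpow (.inl (Nat.cast_ne_zero.2 (Nat.succ_ne_zero _)))).sub
      (differentiable_neg.const_cpow (.inl (Nat.cast_ne_zero.2 (Nat.succ_ne_zero _))))).mul_const _
  have htsum : DifferentiableOn ℂ (fun w ↦ ∑' j, abelPolylogTerm z w j) (Metric.ball s₀ σ) := by
    refine differentiableOn_tsum_of_summable_norm
      ((summable_natCast_succ_rpow (by linarith : -σ - 1 < -1)).mul_left
        ((‖s₀‖ + σ) * (2 / ‖z - 1‖)))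
      (fun j ↦ (hterm j).differentiableOn) Metric.isOpen_ball fun j w hw ↦ ?_
    obtain ⟨hw_re, hw_norm⟩ := hball w hw
    refine (norm_abelPolylogTerm_le hz₁ hz (by linarith) j).trans ?_
    gcongr
    · exact_mod_cast Nat.le_add_left 1 j
  exact ((htsum.differentiableAt (Metric.ball_mem_nhds s₀ hσ)).neg).differentiableWithinAt

end Polylog

section ExpZeta

variable {a : ℝ}

theorem cexp_two_pi_I_mul_ne_one (ha : (a : UnitAddCircle) ≠ 0) : cexp (2 * π * I * a) ≠ 1 := by
  rw [Ne, Complex.exp_eq_one_iff]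
  rintro ⟨n, hn⟩
  refine ha ((AddCircle.coe_eq_zero_iff 1).2 ⟨n, ?_⟩)
  have h2πI : (2 * π * I : ℂ) ≠ 0 := by simp [Real.pi_ne_zero, I_ne_zero]
  have hna : (n : ℂ) = a := mul_right_cancel₀ h2πI (by linear_combination -hn)
  simpa using congrArg re hna

theorem norm_cexp_two_pi_I_mul (a : ℝ) : ‖cexp (2 * π * I * a)‖ = 1 := by
  rw [norm_exp]; simp

theorem cexp_two_pi_I_mul_pow (a : ℝ) (k : ℕ) :
    cexp (2 * π * I * a) ^ k = cexp (2 * π * I * k * a) := by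
  rw [← Complex.exp_nat_mul]; ring_nf

theorem abelPolylog_cexp_eq_expZeta (ha : (a : UnitAddCircle) ≠ 0) {s : ℂ} (hs : 0 < s.re) :
    abelPolylog (cexp (2 * π * I * a)) s = HurwitzZeta.expZeta a s := by
  have hz₁ := (norm_cexp_two_pi_I_mul a).le
  have hz := cexp_two_pi_I_mul_ne_one ha
  have hU : IsOpen {s : ℂ | 0 < s.re} := isOpen_lt continuous_const continuous_re
  have hagree : ∀ s : ℂ, 1 < s.re →
      abelPolylog (cexp (2 * π * I * a)) s = HurwitzZeta.expZeta a s := by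
    intro s hs
    have hs₀ : s ≠ 0 := by rintro rfl; norm_num at hs
    have hseries := (hasSum_nat_add_iff' 1).2 (HurwitzZeta.hasSum_expZeta_of_one_lt_re a hs)
    simp only [Finset.range_one, Finset.sum_singleton, Nat.cast_zero, mul_zero, Complex.exp_zero,
      zero_cpow hs₀, div_zero, sub_zero] at hseries
    refine tendsto_nhds_unique (tendsto_sum_range_cpow_mul_pow hz₁ hz (by linarith)) ?_
    convert hseries.tendsto_sum_nat using 3 with n k
    rw [cpow_neg, cexp_two_pi_I_mul_pow, div_eq_inv_mul]
    ring_nf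
  refine ((differentiableOn_abelPolylog hz₁ hz).analyticOnNhd hU)
    |>.eqOn_of_preconnected_of_eventuallyEq
    ((HurwitzZeta.differentiable_expZeta_of_ne_zero ha).differentiableOn.analyticOnNhd hU)
    (convex_halfSpace_re_gt 0).isPreconnected (show (0 : ℝ) < (2 : ℂ).re by norm_num) ?_ hs
  filter_upwards [(isOpen_lt continuous_const continuous_re).mem_nhds
    (show (1 : ℝ) < (2 : ℂ).re by norm_num)] with s hs
  exact hagree s hs

theorem tendsto_sum_Icc_periodizedZeta (ha : (a : UnitAddCircle) ≠ 0) {s : ℂ} (hs : 0 < s.re) :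
    Tendsto (fun K : ℕ ↦ ∑ k ∈ Finset.Icc 1 K, (k : ℂ) ^ (-s) * cexp (2 * π * I * k * a)) atTop
      (𝓝 (periodizedZeta s a)) := by
  rw [periodizedZeta, ← abelPolylog_cexp_eq_expZeta ha hs]
  simpa only [Finset.sum_Icc_one_eq_sum_range, cexp_two_pi_I_mul_pow] using
    tendsto_sum_range_cpow_mul_pow (norm_cexp_two_pi_I_mul a).le (cexp_two_pi_I_mul_ne_one ha) hs

end ExpZeta

theorem Orthonormal.summable_smul_of_summable_norm_sq {𝕜 E ι : Type*} [RCLike 𝕜]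
    [NormedAddCommGroup E] [InnerProductSpace 𝕜 E] [CompleteSpace E] {v : ι → E}
    (hv : Orthonormal 𝕜 v) {c : ι → 𝕜} (hc : Summable fun i ↦ ‖c i‖ ^ 2) :
    Summable fun i ↦ c i • v i := by
  simpa [LinearIsometry.toSpanSingleton_apply] using
    (hv.orthogonalFamily.summable_iff_norm_sq_summable c).2 hc

theorem MeasureTheory.memLp_and_tendsto_eLpNorm_of_tendsto_Lp_of_tendsto_ae {α E : Type*}
    [MeasurableSpace α] {μ : Measure α} [NormedAddCommGroup E] {p : ENNReal} [Fact (1 ≤ p)]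
    {T : ℕ → Lp E p μ} {G : Lp E p μ} {S : ℕ → α → E} {F : α → E} (hT : Tendsto T atTop (𝓝 G))
    (hST : ∀ n, T n =ᵐ[μ] S n) (hSF : ∀ᵐ x ∂μ, Tendsto (fun n ↦ S n x) atTop (𝓝 (F x))) :
    MemLp F p μ ∧ Tendsto (fun n ↦ eLpNorm (fun x ↦ S n x - F x) p μ) atTop (𝓝 0) := by
  have hGF : G =ᵐ[μ] F := by
    obtain ⟨ns, hns, hae⟩ := (tendstoInMeasure_of_tendsto_Lp hT).exists_seq_tendsto_ae
    filter_upwards [hae, hSF, ae_all_iff.2 hST] with x hG hF hTS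
    simp only [hTS] at hG
    exact tendsto_nhds_unique hG (hF.comp hns.tendsto_atTop)
  refine ⟨(Lp.memLp G).ae_eq hGF, ((Lp.tendsto_Lp_iff_tendsto_eLpNorm' T G).1 hT).congr
    fun n ↦ eLpNorm_congr_ae ?_⟩
  filter_upwards [hST n, hGF] with x hTx hGx
  simp [hTx, hGx]

section FourierL2

local notation "μ₀₁" => volume.restrict (Ioo (0 : ℝ) 1)

theorem memLp_cexp_two_pi_I_mul (m : ℤ) :
    MemLp (fun a : ℝ ↦ cexp (2 * π * I * m * a)) 2 μ₀₁ :=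
  .of_bound (by fun_prop : Continuous fun a : ℝ ↦ cexp (2 * π * I * m * a)).aestronglyMeasurable 1
    (.of_forall fun a ↦ by rw [norm_exp]; simp)

noncomputable def expLp (m : ℤ) : Lp ℂ 2 μ₀₁ := (memLp_cexp_two_pi_I_mul m).toLp _

theorem integral_Ioo_cexp_two_pi_I_mul (m : ℤ) :
    ∫ a in Ioo (0 : ℝ) 1, cexp (2 * π * I * m * a) = if m = 0 then 1 else 0 := by
  rw [← integral_Ioc_eq_integral_Ioo, ← intervalIntegral.integral_of_le zero_le_one]
  split_ifs with hm
  · simp [hm]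
  · rw [integral_exp_mul_complex (by simp [hm, Real.pi_ne_zero, I_ne_zero])]
    simp only [ofReal_one, ofReal_zero, mul_one, mul_zero, Complex.exp_zero]
    rw [show 2 * π * I * m = m * (2 * π * I) by ring, exp_int_mul_two_pi_mul_I, sub_self,
      zero_div]

theorem orthonormal_expLp : Orthonormal ℂ expLp := by
  rw [orthonormal_iff_ite]
  intro m n
  have hinner : ∀ᵐ a ∂μ₀₁,
      inner ℂ (expLp m a) (expLp n a) = cexp (2 * π * I * (n - m : ℤ) * a) := by
    filter_upwards [(memLp_cexp_two_pi_I_mul m).coeFn_toLp,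
      (memLp_cexp_two_pi_I_mul n).coeFn_toLp] with a hm hn
    rw [expLp, expLp, hm, hn, RCLike.inner_apply, ← exp_conj, ← Complex.exp_add]
    congr 1
    simp only [map_mul, conj_I, conj_ofReal, map_ofNat, map_intCast]
    push_cast
    ring
  rw [L2.inner_def, integral_congr_ae hinner, integral_Ioo_cexp_two_pi_I_mul]
  simp only [sub_eq_zero, eq_comm]

theorem coeFn_sum_smul_expLp (c : ℕ → ℂ) (s : Finset ℕ) :
    ⇑(∑ k ∈ s, c k • expLp k) =ᵐ[μ₀₁] fun a ↦ ∑ k ∈ s, c k * cexp (2 * π * I * k * a) := by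
  filter_upwards [Lp.coeFn_fun_finsetSum s fun k ↦ c k • expLp k,
    ae_all_iff.2 fun k ↦ Lp.coeFn_smul (c k) (expLp k),
    ae_all_iff.2 fun k : ℕ ↦ (memLp_cexp_two_pi_I_mul k).coeFn_toLp] with a hsum hsmul hexp
  rw [hsum]
  refine Finset.sum_congr rfl fun k _ ↦ ?_
  rw [hsmul k, Pi.smul_apply, expLp, hexp k, smul_eq_mul, Int.cast_natCast]

theorem exists_tendsto_sum_Icc_cpow_smul_expLp {s : ℂ} (hs : 1 / 2 < s.re) :
    ∃ G : Lp ℂ 2 μ₀₁,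
      Tendsto (fun K : ℕ ↦ ∑ k ∈ Finset.Icc 1 K, (k : ℂ) ^ (-s) • expLp k) atTop (𝓝 G) := by
  have hv : Orthonormal ℂ fun j : ℕ ↦ expLp (j + 1 : ℕ) :=
    orthonormal_expLp.comp _ fun i j h ↦ by simpa using h
  have hc : Summable fun j : ℕ ↦ ‖((j + 1 : ℕ) : ℂ) ^ (-s)‖ ^ 2 := by
    simp_rw [norm_natCast_cpow_of_pos (Nat.succ_pos _), neg_re,
      ← rpow_mul_natCast (Nat.cast_nonneg _)]
    exact summable_natCast_succ_rpow (by push_cast; linarith)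
  obtain ⟨G, hG⟩ := hv.summable_smul_of_summable_norm_sq hc
  exact ⟨G, by simpa only [Finset.sum_Icc_one_eq_sum_range] using hG.tendsto_sum_nat⟩

end FourierL2

theorem periodizedZeta_L2_convergence_general (s : ℂ) (hσ : 1 / 2 < s.re) :
    MeasureTheory.MemLp (periodizedZeta s) 2
      (MeasureTheory.volume.restrict (Set.Ioo (0 : ℝ) 1)) ∧
    Filter.Tendsto
      (fun K : ℕ =>
        MeasureTheory.eLpNorm
          (fun a : ℝ =>
            (∑ k ∈ Finset.Icc 1 K, (k : ℂ) ^ (-s) * Complex.exp (2 * π * Complex.I * k * a))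
              - periodizedZeta s a) 2
          (MeasureTheory.volume.restrict (Set.Ioo (0 : ℝ) 1)))
      Filter.atTop (nhds 0) := by
  obtain ⟨G, hG⟩ := exists_tendsto_sum_Icc_cpow_smul_expLp hσ
  refine memLp_and_tendsto_eLpNorm_of_tendsto_Lp_of_tendsto_ae hG
    (fun K ↦ coeFn_sum_smul_expLp _ _) ?_
  filter_upwards [ae_restrict_mem measurableSet_Ioo] with a ha
  have ha₀ : (a : UnitAddCircle) ≠ 0 :=
    (AddCircle.coe_eq_zero_iff_of_mem_Ico (Ioo_subset_Ico_self ha)).not.2 ha.1.ne'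
  exact tendsto_sum_Icc_periodizedZeta ha₀ (by linarith)

/-- for `Re s > 1/2` with moreover `Re s > 1` or `|Im s| > 1`, `F_s` belongs
to `L²(0,1)` and the partial sums `∑_{k=1}^K k^{-s} e^{2πika}` converge to `F_s` in the
`L²(0,1)` norm. -/
theorem periodizedZeta_L2_convergence (s : ℂ) (hσ : 1 / 2 < s.re)
    (h : 1 < s.re ∨ 1 < |s.im|) :
    MeasureTheory.MemLp (periodizedZeta s) 2
      (MeasureTheory.volume.restrict (Set.Ioo (0 : ℝ) 1)) ∧
    Filter.Tendsto
      (fun K : ℕ =>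
        MeasureTheory.eLpNorm
          (fun a : ℝ =>
            (∑ k ∈ Finset.Icc 1 K, (k : ℂ) ^ (-s) * Complex.exp (2 * π * Complex.I * k * a))
              - periodizedZeta s a) 2
          (MeasureTheory.volume.restrict (Set.Ioo (0 : ℝ) 1)))
      Filter.atTop (nhds 0) :=
  periodizedZeta_L2_convergence_general s hσ
end
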